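/- Let u : ℝ² → ℝ² be a continuously differentiable vector field with compact support and let c, r : ℝ² → ℝ be continuously differentiable functions. Then b(u, c, r) = −b(u, r, c). -/

import Mathlib

open MeasureTheory

/-- The divergence `div u = ∑_j ∂_j u_j` at a point `x`. -/
noncomputable def divg (u : (Fin 2 → ℝ) → (Fin 2 → ℝ)) (x : Fin 2 → ℝ) : ℝ :=
  ∑ j, fderiv ℝ u x (Pi.single j 1) j

/-- The trilinear form
`b(u, c, r) = ∫ (u·∇c) r dx + (1/2) ∫ (div u) c r dx`,
where `u·∇c = ∑_j u_j ∂_j c`. -/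
noncomputable def bform (u : (Fin 2 → ℝ) → (Fin 2 → ℝ)) (c r : (Fin 2 → ℝ) → ℝ) : ℝ :=
  (∫ x, fderiv ℝ c x (u x) * r x) + (1 / 2) * ∫ x, divg u x * (c x * r x)

/-! The two transport terms add up to a divergence,
`(u·∇c) r + (u·∇r) c + (div u) c r = div (c r u)`, and `c r u` is `C¹` with compact support,
so each `∫ ∂_j (c r u_j)` vanishes by integration by parts against the constant `1`. -/

theorem ContinuousLinearMap.apply_eq_sum_mul_apply_single {ι : Type*} [Fintype ι]
    [DecidableEq ι] (L : (ι → ℝ) →L[ℝ] ℝ) (w : ι → ℝ) :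
    L w = ∑ j, w j * L (Pi.single j 1) := by
  conv_lhs => rw [← Finset.univ_sum_single w, map_sum]
  refine Finset.sum_congr rfl fun j _ ↦ ?_
  rw [← smul_eq_mul, ← map_smul, ← Pi.single_smul', smul_eq_mul, mul_one]

section IntegralFDeriv

variable {E F : Type*} [NormedAddCommGroup E] [NormedSpace ℝ E] [MeasurableSpace E]
  [BorelSpace E] [NormedAddCommGroup F] [NormedSpace ℝ F] {μ : Measure E}

theorem integrable_fderiv_apply_mul [IsFiniteMeasureOnCompacts μ] {u : E → E} {c r : E → ℝ}
    (hc : ContDiff ℝ 1 c) (hu : Continuous u) (hus : HasCompactSupport u) (hr : Continuous r) :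
    Integrable (fun x ↦ fderiv ℝ c x (u x) * r x) μ := by
  have hsupp : HasCompactSupport (fun x ↦ fderiv ℝ c x (u x)) :=
    hus.mono' fun x hx ↦ subset_tsupport _ fun h ↦ hx (by simp [h])
  exact ((hc.continuous_fderiv one_ne_zero).clm_apply hu |>.mul hr)
    |>.integrable_of_hasCompactSupport hsupp.mul_right

theorem integral_fderiv_apply_eq_zero [FiniteDimensional ℝ E] [μ.IsAddHaarMeasure] {φ : E → F}
    (hφ : ContDiff ℝ 1 φ) (hφs : HasCompactSupport φ) (v : E) :
    ∫ x, fderiv ℝ φ x v ∂μ = 0 := by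
  have h := integral_smul_fderiv_eq_neg_fderiv_smul_of_integrable (μ := μ)
    (f := fun _ ↦ (1 : ℝ)) (g := φ) (v := v) (by simp)
    (by simpa using ((hφ.continuous_fderiv one_ne_zero).clm_apply continuous_const)
      |>.integrable_of_hasCompactSupport (hφs.fderiv_apply ℝ v))
    (by simpa using hφ.continuous.integrable_of_hasCompactSupport hφs)
    (fun _ _ ↦ differentiableAt_const _) (fun x _ ↦ hφ.differentiable one_ne_zero x)
  simpa using h

end IntegralFDeriv

section Divergence

variable {u : (Fin 2 → ℝ) → (Fin 2 → ℝ)}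

theorem divg_smul {g : (Fin 2 → ℝ) → ℝ} {x : Fin 2 → ℝ} (hg : DifferentiableAt ℝ g x)
    (hu : DifferentiableAt ℝ u x) :
    divg (fun y ↦ g y • u y) x = fderiv ℝ g x (u x) + g x * divg u x := by
  rw [(fderiv ℝ g x).apply_eq_sum_mul_apply_single, divg, divg, Finset.mul_sum,
    ← Finset.sum_add_distrib, fderiv_fun_smul hg hu]
  refine Finset.sum_congr rfl fun j _ ↦ ?_
  simp only [add_apply, smul_apply, ContinuousLinearMap.smulRight_apply, Pi.add_apply,
    Pi.smul_apply, smul_eq_mul]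
  ring

theorem continuous_divg (hu : ContDiff ℝ 1 u) : Continuous (divg u) := by
  unfold divg
  fun_prop

theorem HasCompactSupport.divg (hus : HasCompactSupport u) : HasCompactSupport (divg u) :=
  (hus.fderiv ℝ).mono' fun x hx ↦ subset_tsupport _ fun h ↦ hx (by simp [_root_.divg, h])

theorem integral_divg_eq_zero (hu : ContDiff ℝ 1 u) (hus : HasCompactSupport u) :
    ∫ x, divg u x = 0 := by
  have hint (j : Fin 2) : Integrable (fun x ↦ fderiv ℝ u x (Pi.single j 1)) :=
    ((hu.continuous_fderiv one_ne_zero).clm_apply continuous_const)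
      |>.integrable_of_hasCompactSupport (hus.fderiv_apply ℝ _)
  unfold divg
  rw [integral_finsetSum _ fun j _ ↦ (hint j).eval j]
  refine Finset.sum_eq_zero fun j _ ↦ ?_
  rw [← eval_integral (hint j).eval, integral_fderiv_apply_eq_zero hu hus, Pi.zero_apply]

end Divergence

theorem bform_add_bform_swap {u : (Fin 2 → ℝ) → (Fin 2 → ℝ)} {c r : (Fin 2 → ℝ) → ℝ}
    (hu : ContDiff ℝ 1 u) (hus : HasCompactSupport u) (hc : ContDiff ℝ 1 c)
    (hr : ContDiff ℝ 1 r) :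
    bform u c r + bform u r c = ∫ x, divg (fun y ↦ (c y * r y) • u y) x := by
  have hdivg (x) : divg (fun y ↦ (c y * r y) • u y) x
      = fderiv ℝ c x (u x) * r x + fderiv ℝ r x (u x) * c x + divg u x * (c x * r x) := by
    have hc' := hc.differentiable one_ne_zero x
    have hr' := hr.differentiable one_ne_zero x
    rw [divg_smul (hc'.fun_mul hr') (hu.differentiable one_ne_zero x), fderiv_fun_mul hc' hr']
    simp only [add_apply, smul_apply, smul_eq_mul]
    ring
  have hA := integrable_fderiv_apply_mul (μ := volume) hc hu.continuous hus hr.continuous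
  have hB := integrable_fderiv_apply_mul (μ := volume) hr hu.continuous hus hc.continuous
  have hD : Integrable (fun x ↦ divg u x * (c x * r x)) :=
    ((continuous_divg hu).mul (hc.continuous.mul hr.continuous)).integrable_of_hasCompactSupport
      hus.divg.mul_right
  simp only [hdivg]
  rw [integral_add (hA.fun_add hB) hD, integral_add hA hB]
  simp only [bform, mul_comm (r _) (c _)]
  ring

/-- Antisymmetry property (2.14) for the concentration transport term:
`b(u, c, r) = -b(u, r, c)`. -/
theorem bform_antisymm
    (u : (Fin 2 → ℝ) → (Fin 2 → ℝ)) (c r : (Fin 2 → ℝ) → ℝ)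
    (hu : ContDiff ℝ 1 u) (hus : HasCompactSupport u)
    (hc : ContDiff ℝ 1 c) (hr : ContDiff ℝ 1 r) :
    bform u c r = -bform u r c := by
  have h := bform_add_bform_swap hu hus hc hr
  rw [integral_divg_eq_zero (u := fun y ↦ (c y * r y) • u y) ((hc.mul hr).smul hu)
    (hus.smul_left (f := fun y ↦ c y * r y))] at h
  linarith
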